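/- Let R = ((ℓ_1,…,ℓ_d),(u_1,…,u_{d+1})) be a constructible special point data of level d with q nodes, with u_1, …, u_{d+1} listed in increasing lexicographic order, and let c be a rational number. Define b_j := ⌈(|a_{u_j}(R)| + c)/q − 1/2⌉ for j = 1,…,d+1. Then there exist indices h_min, h_max ∈ {1,…,d+1} such that for every node label ℓ ∈ {1,…,q} and every j ∈ {1,…,d+1} one has a^ℓ_{u_{h_min}}(R) − b_{h_min} ≤ a^ℓ_{u_j}(R) − b_j ≤ a^ℓ_{u_{h_max}}(R) − b_{h_max}. In particular, the minimum and the maximum of the function F(j_1,…,j_q) = Σ_{ℓ=1}^q (a^ℓ_{u_{j_ℓ}}(R) − b_{j_ℓ}) over all functions j : {1,…,q} → {1,…,d+1} are attained at the constant functions (h_min,…,h_min) and (h_max,…,h_max) respectively. -/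

import Mathlib

/-!
For any two tuples `x, y` of a constructible datum, the differences `a^ℓ_x - a^ℓ_y` over the
labels `ℓ` lie within one of each other. This survives the extension step only together with
the information where they are extremal: maximal at labels `ℓ` with `x <_ℓ y`, minimal at
labels with `y <_ℓ x`, and strictly separated when both happen. Since `b_j` does not depend
on `ℓ`, the same holds for `a^ℓ_{u_j} - b_j`, and then an index minimizing (maximizing)
`Σ_ℓ (a^ℓ_{u_j} - b_j)` is minimal (maximal) for every label separately.
-/


/-- The relation `u <_ℓ u'` on `{1,2}^d`, relative to node labels `lab : Fin d → ℕ`. -/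
def ltNode {d : ℕ} (lab : Fin d → ℕ) (ℓ : ℕ) (u u' : Fin d → ℕ) : Prop :=
  (∃ k₀ : Fin d, lab k₀ = ℓ ∧ u k₀ = 2 ∧ u' k₀ = 1 ∧
      ∀ k : Fin d, k₀ < k → lab k = ℓ → u k = u' k) ∨
  ((∀ k : Fin d, lab k = ℓ → u k = u' k) ∧
    ∃ k₀ : Fin d, lab k₀ ≠ ℓ ∧ u k₀ = 1 ∧ u' k₀ = 2 ∧
      ∀ k : Fin d, k < k₀ → u k = u' k)

/-- Constructible special point data of level `d` with `q` nodes. -/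
inductive Constructible (q : ℕ) :
    (d : ℕ) → (Fin d → ℕ) → (Fin (d + 1) → Fin d → ℕ) → Prop
  | base (ℓ : ℕ) (h1 : 1 ≤ ℓ) (hq : ℓ ≤ q) :
      Constructible q 1 (fun _ => ℓ) ![![1], ![2]]
  | step {d : ℕ} {lab : Fin d → ℕ} {u : Fin (d + 1) → Fin d → ℕ}
      (hR : Constructible q d lab u) (ℓ : ℕ) (h1 : 1 ≤ ℓ) (hq : ℓ ≤ q)
      (v : Fin (d + 1) → Fin d → ℕ) (σ : Equiv.Perm (Fin (d + 1)))
      (hv : ∀ j, v j = u (σ j))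
      (hsort : ∀ i j : Fin (d + 1), i < j → ltNode lab ℓ (v i) (v j))
      (h : ℕ) (hh1 : 1 ≤ h) (hh2 : h ≤ d + 1) :
      Constructible q (d + 1) (Fin.snoc lab ℓ)
        (fun j : Fin (d + 2) =>
          if hj : (j : ℕ) < h then Fin.snoc (v ⟨(j : ℕ), by omega⟩) 1
          else Fin.snoc (v ⟨(j : ℕ) - 1, by omega⟩) 2)

/-- `a^ℓ_u(R)`: the number of `k` with `ℓ_k = ℓ` and `u(k) = 2`. -/
def aCount {d : ℕ} (lab : Fin d → ℕ) (ℓ : ℕ) (u : Fin d → ℕ) : ℕ :=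
  (Finset.univ.filter (fun k : Fin d => lab k = ℓ ∧ u k = 2)).card

/-- `|a_u(R)|`: the number of `k` with `u(k) = 2`. -/
def aTot {d : ℕ} (u : Fin d → ℕ) : ℕ :=
  (Finset.univ.filter (fun k : Fin d => u k = 2)).card

/-- Lexicographic order on tuples, comparing at the smallest coordinate where they differ. -/
def lexLt {d : ℕ} (u u' : Fin d → ℕ) : Prop :=
  ∃ k₀ : Fin d, (∀ k : Fin d, k < k₀ → u k = u' k) ∧ u k₀ < u' k₀

lemma ltNode_irrefl {d : ℕ} (lab : Fin d → ℕ) (ℓ : ℕ) (x : Fin d → ℕ) :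
    ¬ ltNode lab ℓ x x := by
  rintro (⟨k₀, -, h2, h3, -⟩ | ⟨-, k₀, -, h2, h3, -⟩) <;> omega

lemma ltNode_snoc {d : ℕ} {lab : Fin d → ℕ} {a ℓ : ℕ} {x y : Fin d → ℕ} {e f : ℕ}
    (H : ltNode (Fin.snoc lab a) ℓ (Fin.snoc x e) (Fin.snoc y f)) :
    (a = ℓ ∧ e = 2 ∧ f = 1) ∨ ((a = ℓ → e = f) ∧ ltNode lab ℓ x y) ∨
      (a ≠ ℓ ∧ x = y ∧ e = 1 ∧ f = 2) := by
  simp only [ltNode, Fin.exists_fin_succ', Fin.forall_fin_succ', Fin.snoc_castSucc, Fin.snoc_last,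
    Fin.castSucc_lt_castSucc_iff, Fin.castSucc_lt_last, lt_self_iff_false, true_implies,
    false_implies, and_true] at H
  rcases H with (⟨k, hk, hx, hy, hsuf, hae⟩ | ⟨ha, he, hf, -⟩) |
    ⟨⟨hall, hae⟩, ⟨k, hk, hx, hy, hpre, -⟩ | ⟨ha, he, hf, hxy⟩⟩
  · exact Or.inr (Or.inl ⟨hae, Or.inl ⟨k, hk, hx, hy, hsuf⟩⟩)
  · exact Or.inl ⟨ha, he, hf⟩
  · exact Or.inr (Or.inl ⟨hae, Or.inr ⟨hall, k, hk, hx, hy, hpre⟩⟩)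
  · exact Or.inr (Or.inr ⟨ha, funext hxy, he, hf⟩)

lemma ltNode_snoc_same {d : ℕ} {lab : Fin d → ℕ} {a ℓ : ℕ} {x y : Fin d → ℕ} {e : ℕ}
    (H : ltNode (Fin.snoc lab a) ℓ (Fin.snoc x e) (Fin.snoc y e)) : ltNode lab ℓ x y := by
  rcases ltNode_snoc H with ⟨-, he, hf⟩ | ⟨-, hxy⟩ | ⟨-, -, he, hf⟩
  · omega
  · exact hxy
  · omega

lemma ltNode_snoc_one_two {d : ℕ} {lab : Fin d → ℕ} {a ℓ : ℕ} {x y : Fin d → ℕ}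
    (H : ltNode (Fin.snoc lab a) ℓ (Fin.snoc x 1) (Fin.snoc y 2)) :
    a ≠ ℓ ∧ (ltNode lab ℓ x y ∨ x = y) := by
  rcases ltNode_snoc H with ⟨-, he, -⟩ | ⟨hae, hxy⟩ | ⟨ha, hxy, -⟩
  · omega
  · exact ⟨fun ha => by have := hae ha; omega, Or.inl hxy⟩
  · exact ⟨ha, Or.inr hxy⟩

lemma ltNode_snoc_two_one {d : ℕ} {lab : Fin d → ℕ} {a ℓ : ℕ} {x y : Fin d → ℕ}
    (H : ltNode (Fin.snoc lab a) ℓ (Fin.snoc x 2) (Fin.snoc y 1)) :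
    a = ℓ ∨ ltNode lab ℓ x y := by
  rcases ltNode_snoc H with ⟨ha, -⟩ | ⟨-, hxy⟩ | ⟨-, -, he, -⟩
  · exact Or.inl ha
  · exact Or.inr hxy
  · omega

def aDiff {d : ℕ} (lab : Fin d → ℕ) (ℓ : ℕ) (x y : Fin d → ℕ) : ℤ :=
  aCount lab ℓ x - aCount lab ℓ y

lemma aDiff_self {d : ℕ} (lab : Fin d → ℕ) (ℓ : ℕ) (x : Fin d → ℕ) : aDiff lab ℓ x x = 0 :=
  sub_self _

lemma aDiff_swap {d : ℕ} (lab : Fin d → ℕ) (ℓ : ℕ) (x y : Fin d → ℕ) :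
    aDiff lab ℓ y x = -aDiff lab ℓ x y :=
  (neg_sub _ _).symm

lemma aCount_snoc {d : ℕ} (lab : Fin d → ℕ) (a ℓ : ℕ) (x : Fin d → ℕ) (e : ℕ) :
    aCount (Fin.snoc lab a) ℓ (Fin.snoc x e) = aCount lab ℓ x + if a = ℓ ∧ e = 2 then 1 else 0 := by
  simp only [aCount, Finset.card_filter, Fin.sum_univ_castSucc, Fin.snoc_castSucc, Fin.snoc_last]

lemma aDiff_snoc_same {d : ℕ} (lab : Fin d → ℕ) (a ℓ : ℕ) (x y : Fin d → ℕ) (e : ℕ) :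
    aDiff (Fin.snoc lab a) ℓ (Fin.snoc x e) (Fin.snoc y e) = aDiff lab ℓ x y := by
  simp only [aDiff, aCount_snoc]
  push_cast
  ring

lemma aDiff_snoc_one_two {d : ℕ} (lab : Fin d → ℕ) (a ℓ : ℕ) (x y : Fin d → ℕ) :
    aDiff (Fin.snoc lab a) ℓ (Fin.snoc x 1) (Fin.snoc y 2) =
      aDiff lab ℓ x y - if a = ℓ then 1 else 0 := by
  by_cases h : a = ℓ <;> simp [aDiff, aCount_snoc, h, sub_add_eq_sub_sub]

structure BalancedPair (L : Finset ℕ) {d : ℕ} (lab : Fin d → ℕ) (x y : Fin d → ℕ) : Prop where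
  le_add_one : ∀ ℓ ∈ L, ∀ ℓ' ∈ L, aDiff lab ℓ x y ≤ aDiff lab ℓ' x y + 1
  le_of_ltNode : ∀ ℓ ∈ L, ∀ ℓ' ∈ L, ltNode lab ℓ x y → aDiff lab ℓ' x y ≤ aDiff lab ℓ x y
  ge_of_ltNode : ∀ ℓ ∈ L, ∀ ℓ' ∈ L, ltNode lab ℓ y x → aDiff lab ℓ x y ≤ aDiff lab ℓ' x y
  lt_of_ltNode_of_ltNode : ∀ ℓ ∈ L, ∀ ℓ' ∈ L,
    ltNode lab ℓ x y → ltNode lab ℓ' y x → aDiff lab ℓ' x y < aDiff lab ℓ x y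

lemma balancedPair_snoc_one_two_self (L : Finset ℕ) {d : ℕ} (lab : Fin d → ℕ) (a : ℕ)
    (x : Fin d → ℕ) : BalancedPair L (Fin.snoc lab a) (Fin.snoc x 1) (Fin.snoc x 2) := by
  have hne : ∀ {ℓ}, ltNode (Fin.snoc lab a) ℓ (Fin.snoc x 1) (Fin.snoc x 2) → a ≠ ℓ :=
    fun h => (ltNode_snoc_one_two h).1
  have heq : ∀ {ℓ}, ltNode (Fin.snoc lab a) ℓ (Fin.snoc x 2) (Fin.snoc x 1) → a = ℓ :=
    fun h => (ltNode_snoc_two_one h).resolve_right (ltNode_irrefl _ _ _)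
  refine ⟨fun ℓ _ ℓ' _ => ?_, fun ℓ _ ℓ' _ h => ?_, fun ℓ _ ℓ' _ h => ?_,
    fun ℓ _ ℓ' _ h h' => ?_⟩ <;> simp only [aDiff_snoc_one_two, aDiff_self]
  · split_ifs <;> omega
  · have := hne h
    split_ifs <;> omega
  · have := heq h
    split_ifs <;> omega
  · rw [if_neg (hne h), if_pos (heq h')]
    omega

namespace BalancedPair

variable {L : Finset ℕ} {d : ℕ} {lab : Fin d → ℕ} {x y : Fin d → ℕ}

lemma refl (L : Finset ℕ) (lab : Fin d → ℕ) (x : Fin d → ℕ) : BalancedPair L lab x x where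
  le_add_one _ _ _ _ := by simp only [aDiff_self]; omega
  le_of_ltNode _ _ _ _ h := absurd h (ltNode_irrefl _ _ _)
  ge_of_ltNode _ _ _ _ h := absurd h (ltNode_irrefl _ _ _)
  lt_of_ltNode_of_ltNode _ _ _ _ h := absurd h (ltNode_irrefl _ _ _)

lemma symm (H : BalancedPair L lab x y) : BalancedPair L lab y x where
  le_add_one ℓ hℓ ℓ' hℓ' := by
    have := H.le_add_one ℓ' hℓ' ℓ hℓ
    simp only [aDiff_swap lab _ x y]; omega
  le_of_ltNode ℓ hℓ ℓ' hℓ' h := by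
    have := H.ge_of_ltNode ℓ hℓ ℓ' hℓ' h
    simp only [aDiff_swap lab _ x y]; omega
  ge_of_ltNode ℓ hℓ ℓ' hℓ' h := by
    have := H.le_of_ltNode ℓ hℓ ℓ' hℓ' h
    simp only [aDiff_swap lab _ x y]; omega
  lt_of_ltNode_of_ltNode ℓ hℓ ℓ' hℓ' h h' := by
    have := H.lt_of_ltNode_of_ltNode ℓ' hℓ' ℓ hℓ h' h
    simp only [aDiff_swap lab _ x y]; omega

lemma snoc_same (H : BalancedPair L lab x y) (a e : ℕ) :
    BalancedPair L (Fin.snoc lab a) (Fin.snoc x e) (Fin.snoc y e) where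
  le_add_one ℓ hℓ ℓ' hℓ' := by
    simpa only [aDiff_snoc_same] using H.le_add_one ℓ hℓ ℓ' hℓ'
  le_of_ltNode ℓ hℓ ℓ' hℓ' h := by
    simpa only [aDiff_snoc_same] using H.le_of_ltNode ℓ hℓ ℓ' hℓ' (ltNode_snoc_same h)
  ge_of_ltNode ℓ hℓ ℓ' hℓ' h := by
    simpa only [aDiff_snoc_same] using H.ge_of_ltNode ℓ hℓ ℓ' hℓ' (ltNode_snoc_same h)
  lt_of_ltNode_of_ltNode ℓ hℓ ℓ' hℓ' h h' := by
    simpa only [aDiff_snoc_same] using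
      H.lt_of_ltNode_of_ltNode ℓ hℓ ℓ' hℓ' (ltNode_snoc_same h) (ltNode_snoc_same h')

lemma snoc_one_two {a : ℕ} (H : BalancedPair L lab x y) (ha : a ∈ L) (hxy : ltNode lab a x y) :
    BalancedPair L (Fin.snoc lab a) (Fin.snoc x 1) (Fin.snoc y 2) := by
  have ltNode_of_snoc : ∀ {ℓ}, ltNode (Fin.snoc lab a) ℓ (Fin.snoc x 1) (Fin.snoc y 2) →
      a ≠ ℓ ∧ ltNode lab ℓ x y := fun h => by
    obtain ⟨hℓ, hlt | rfl⟩ := ltNode_snoc_one_two h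
    · exact ⟨hℓ, hlt⟩
    · exact absurd hxy (ltNode_irrefl _ _ _)
  refine ⟨fun ℓ hℓ ℓ' hℓ' => ?_, fun ℓ hℓ ℓ' hℓ' h => ?_, fun ℓ hℓ ℓ' hℓ' h => ?_,
    fun ℓ hℓ ℓ' hℓ' h h' => ?_⟩ <;> simp only [aDiff_snoc_one_two]
  · have := H.le_add_one ℓ hℓ ℓ' hℓ'
    have := H.le_of_ltNode a ha ℓ hℓ hxy
    split_ifs <;> subst_vars <;> omega
  · obtain ⟨haℓ, hlt⟩ := ltNode_of_snoc h
    have := H.le_of_ltNode ℓ hℓ ℓ' hℓ' hlt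
    split_ifs <;> omega
  · rcases ltNode_snoc_two_one h with rfl | hlt
    · have := H.le_add_one a hℓ ℓ' hℓ'
      split_ifs <;> subst_vars <;> omega
    · have := H.ge_of_ltNode ℓ hℓ ℓ' hℓ' hlt
      have := H.lt_of_ltNode_of_ltNode a ha ℓ hℓ hxy hlt
      split_ifs <;> subst_vars <;> omega
  · obtain ⟨haℓ, hlt⟩ := ltNode_of_snoc h
    rcases ltNode_snoc_two_one h' with rfl | hlt'
    · have := H.le_of_ltNode ℓ hℓ a hℓ' hlt
      split_ifs <;> omega
    · have := H.lt_of_ltNode_of_ltNode ℓ hℓ ℓ' hℓ' hlt hlt'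
      split_ifs <;> omega

end BalancedPair

lemma balancedPair_snoc_one_two_of_le {L : Finset ℕ} {d n : ℕ} {lab : Fin d → ℕ}
    {v : Fin n → Fin d → ℕ} {a : ℕ} (ha : a ∈ L) (hv : ∀ i j, BalancedPair L lab (v i) (v j))
    (hsort : ∀ i j, i < j → ltNode lab a (v i) (v j)) {i j : Fin n} (hij : i ≤ j) :
    BalancedPair L (Fin.snoc lab a) (Fin.snoc (v i) 1) (Fin.snoc (v j) 2) := by
  rcases hij.eq_or_lt with rfl | hlt
  · exact balancedPair_snoc_one_two_self L lab a (v i)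
  · exact (hv i j).snoc_one_two ha (hsort i j hlt)

theorem Constructible.balancedPair {q d : ℕ} {lab : Fin d → ℕ} {u : Fin (d + 1) → Fin d → ℕ}
    (hR : Constructible q d lab u) : ∀ i j, BalancedPair (Finset.Icc 1 q) lab (u i) (u j) := by
  induction hR with
  | base ℓ₀ _ _ =>
    -- the base datum is the extension step applied to the empty tuple
    have hlab : (fun _ : Fin 1 => ℓ₀) = Fin.snoc (Fin.elim0 : Fin 0 → ℕ) ℓ₀ := by
      funext k; fin_cases k; rfl
    have hu (e : ℕ) : ![e] = Fin.snoc (Fin.elim0 : Fin 0 → ℕ) e := by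
      funext k; fin_cases k; rfl
    have h12 := balancedPair_snoc_one_two_self (Finset.Icc 1 q) Fin.elim0 ℓ₀ Fin.elim0
    rw [← hlab, ← hu, ← hu] at h12
    intro i j
    fin_cases i <;> fin_cases j
    · exact .refl _ _ _
    · exact h12
    · exact h12.symm
    · exact .refl _ _ _
  | step _ a ha₁ haq v _ hv hsort h _ _ ih =>
    have ha : a ∈ Finset.Icc 1 q := Finset.mem_Icc.2 ⟨ha₁, haq⟩
    have hv' : ∀ i j, BalancedPair (Finset.Icc 1 q) _ (v i) (v j) := fun i j => by
      rw [hv, hv]; exact ih _ _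
    intro i j
    dsimp only
    split_ifs with hi hj hj
    · exact (hv' _ _).snoc_same a 1
    · exact balancedPair_snoc_one_two_of_le ha hv' hsort (Fin.mk_le_mk.2 (by omega))
    · exact (balancedPair_snoc_one_two_of_le ha hv' hsort (Fin.mk_le_mk.2 (by omega))).symm
    · exact (hv' _ _).snoc_same a 2

lemma exists_forall_le_of_sub_le_sub_add_one {ι κ : Type*} [Finite ι] [Nonempty ι]
    (S : Finset κ) (f : ι → κ → ℤ)
    (hf : ∀ i j, ∀ ℓ ∈ S, ∀ ℓ' ∈ S, f i ℓ - f j ℓ ≤ f i ℓ' - f j ℓ' + 1) :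
    ∃ m, ∀ j, ∀ ℓ ∈ S, f m ℓ ≤ f j ℓ := by
  obtain ⟨m, hm⟩ := Finite.exists_min fun j => ∑ ℓ ∈ S, f j ℓ
  refine ⟨m, fun j ℓ hℓ => not_lt.1 fun hlt => (hm j).not_gt ?_⟩
  -- once `f j` is below `f m` at one label, it is below or equal at every label
  exact Finset.sum_lt_sum (fun ℓ' hℓ' => by have := hf j m ℓ' hℓ' ℓ hℓ; omega) ⟨ℓ, hℓ, hlt⟩

lemma exists_forall_ge_of_sub_le_sub_add_one {ι κ : Type*} [Finite ι] [Nonempty ι]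
    (S : Finset κ) (f : ι → κ → ℤ)
    (hf : ∀ i j, ∀ ℓ ∈ S, ∀ ℓ' ∈ S, f i ℓ - f j ℓ ≤ f i ℓ' - f j ℓ' + 1) :
    ∃ m, ∀ j, ∀ ℓ ∈ S, f j ℓ ≤ f m ℓ := by
  obtain ⟨m, hm⟩ := exists_forall_le_of_sub_le_sub_add_one S (-f) fun i j ℓ hℓ ℓ' hℓ' => by
    have := hf j i ℓ hℓ ℓ' hℓ'
    simp only [Pi.neg_apply]; omega
  exact ⟨m, fun j ℓ hℓ => neg_le_neg_iff.1 (hm j ℓ hℓ)⟩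

theorem constructible_min_max_general {q d : ℕ}
    {lab : Fin d → ℕ} {u : Fin (d + 1) → Fin d → ℕ}
    (hR : Constructible q d lab u)
    (b : Fin (d + 1) → ℤ) :
    ∃ hmin hmax : Fin (d + 1),
      (∀ ℓ : ℕ, 1 ≤ ℓ → ℓ ≤ q → ∀ j : Fin (d + 1),
        (aCount lab ℓ (u hmin) : ℤ) - b hmin ≤ (aCount lab ℓ (u j) : ℤ) - b j ∧
        (aCount lab ℓ (u j) : ℤ) - b j ≤ (aCount lab ℓ (u hmax) : ℤ) - b hmax) ∧
      (∀ j : ℕ → Fin (d + 1),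
        (∑ ℓ ∈ Finset.Icc 1 q, ((aCount lab ℓ (u hmin) : ℤ) - b hmin)) ≤
          (∑ ℓ ∈ Finset.Icc 1 q, ((aCount lab ℓ (u (j ℓ)) : ℤ) - b (j ℓ))) ∧
        (∑ ℓ ∈ Finset.Icc 1 q, ((aCount lab ℓ (u (j ℓ)) : ℤ) - b (j ℓ))) ≤
          (∑ ℓ ∈ Finset.Icc 1 q, ((aCount lab ℓ (u hmax) : ℤ) - b hmax))) := by
  let f : Fin (d + 1) → ℕ → ℤ := fun j ℓ => (aCount lab ℓ (u j) : ℤ) - b j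
  have hf : ∀ i j, ∀ ℓ ∈ Finset.Icc 1 q, ∀ ℓ' ∈ Finset.Icc 1 q,
      f i ℓ - f j ℓ ≤ f i ℓ' - f j ℓ' + 1 := fun i j ℓ hℓ ℓ' hℓ' => by
    have := (hR.balancedPair i j).le_add_one ℓ hℓ ℓ' hℓ'
    simp only [f, aDiff] at this ⊢
    omega
  obtain ⟨hmin, hmin_le⟩ := exists_forall_le_of_sub_le_sub_add_one _ f hf
  obtain ⟨hmax, le_hmax⟩ := exists_forall_ge_of_sub_le_sub_add_one _ f hf
  refine ⟨hmin, hmax, fun ℓ h₁ h₂ j => ?_, fun j => ?_⟩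
  · exact ⟨hmin_le j ℓ (Finset.mem_Icc.2 ⟨h₁, h₂⟩), le_hmax j ℓ (Finset.mem_Icc.2 ⟨h₁, h₂⟩)⟩
  · exact ⟨Finset.sum_le_sum fun ℓ hℓ => hmin_le (j ℓ) ℓ hℓ,
      Finset.sum_le_sum fun ℓ hℓ => le_hmax (j ℓ) ℓ hℓ⟩

/-- For a constructible special point data with tuples listed in increasing lexicographic
order and `b_j = ⌈(|a_{u_j}(R)| + c)/q − 1/2⌉`, there are indices `h_min, h_max` at which
`a^ℓ_{u_j}(R) − b_j` is minimal resp. maximal simultaneously for all node labels `ℓ`;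
in particular the minimum and maximum of
`F(j_1,…,j_q) = Σ_{ℓ=1}^q (a^ℓ_{u_{j_ℓ}}(R) − b_{j_ℓ})` are attained at the constant
functions. -/
theorem constructible_min_max {q d : ℕ} (hq : 1 ≤ q) (hd : 1 ≤ d)
    {lab : Fin d → ℕ} {u : Fin (d + 1) → Fin d → ℕ}
    (hR : Constructible q d lab u)
    (hlex : ∀ i j : Fin (d + 1), i < j → lexLt (u i) (u j))
    (c : ℚ) (b : Fin (d + 1) → ℤ)
    (hb : ∀ j : Fin (d + 1), b j = ⌈((aTot (u j) : ℚ) + c) / (q : ℚ) - 1 / 2⌉) :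
    ∃ hmin hmax : Fin (d + 1),
      (∀ ℓ : ℕ, 1 ≤ ℓ → ℓ ≤ q → ∀ j : Fin (d + 1),
        (aCount lab ℓ (u hmin) : ℤ) - b hmin ≤ (aCount lab ℓ (u j) : ℤ) - b j ∧
        (aCount lab ℓ (u j) : ℤ) - b j ≤ (aCount lab ℓ (u hmax) : ℤ) - b hmax) ∧
      (∀ j : ℕ → Fin (d + 1),
        (∑ ℓ ∈ Finset.Icc 1 q, ((aCount lab ℓ (u hmin) : ℤ) - b hmin)) ≤
          (∑ ℓ ∈ Finset.Icc 1 q, ((aCount lab ℓ (u (j ℓ)) : ℤ) - b (j ℓ))) ∧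
        (∑ ℓ ∈ Finset.Icc 1 q, ((aCount lab ℓ (u (j ℓ)) : ℤ) - b (j ℓ))) ≤
          (∑ ℓ ∈ Finset.Icc 1 q, ((aCount lab ℓ (u hmax) : ℤ) - b hmax))) :=
  constructible_min_max_general hR b
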